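/- Let (Ω, μ) be a probability measure space, p > 2, and let f, g : Ω → ℝ_{≥0} be measurable with ‖f‖_p‖g‖₂ ≤ 1 + ε and 1 ≤ ‖f‖_p‖g‖_{p/(p−1)}. Then 1 − ‖g‖₁/‖g‖₂ ≤ 1 − (1+ε)^{−p/(p−2)}. -/

import Mathlib

/-!
Hölder's inequality with the exponents `(p-1)/(p-2)` and `p-1` interpolates the `L^{p/(p-1)}` norm
between `L¹` and `L²`: `‖g‖_{p/(p-1)} ≤ ‖g‖₁^{(p-2)/p} ‖g‖₂^{2/p}`. Multiplying by `‖f‖_p` and using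
both hypotheses gives `1 ≤ (1+ε) (‖g‖₁/‖g‖₂)^{(p-2)/p}`, which rearranges to the claim.
-/

open MeasureTheory

section Lyapunov

variable {α : Type*} [MeasurableSpace α] {μ : Measure α} {g : α → ℝ}

lemma memLp_rpow_of_integrable_rpow_mul (hg0 : 0 ≤ᵐ[μ] g) (hgm : AEMeasurable g μ)
    {a r : ℝ} (hr : 0 < r) (h : Integrable (fun x => g x ^ (a * r)) μ) :
    MemLp (fun x => g x ^ a) (ENNReal.ofReal r) μ := by
  rw [← integrable_norm_rpow_iff (hgm.pow_const a).aestronglyMeasurable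
    (by simpa using hr) ENNReal.ofReal_ne_top, ENNReal.toReal_ofReal hr.le]
  refine h.congr ?_
  filter_upwards [hg0] with x hx
  rw [Real.norm_of_nonneg (Real.rpow_nonneg hx a), ← Real.rpow_mul hx]

/-- Lyapunov's inequality: `s ↦ log ∫ g ^ s` is convex. -/
theorem integral_rpow_convexComb_le (hg0 : 0 ≤ᵐ[μ] g) (hgm : AEMeasurable g μ)
    {a b θ : ℝ} (ha : 0 ≤ a) (hb : 0 ≤ b) (hθ₀ : 0 < θ) (hθ₁ : θ < 1)
    (hga : Integrable (fun x => g x ^ a) μ) (hgb : Integrable (fun x => g x ^ b) μ) :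
    ∫ x, g x ^ (θ * a + (1 - θ) * b) ∂μ ≤
      (∫ x, g x ^ a ∂μ) ^ θ * (∫ x, g x ^ b ∂μ) ^ (1 - θ) := by
  have hθ₁' : 0 < 1 - θ := sub_pos.2 hθ₁
  have hua : θ * a * θ⁻¹ = a := by field_simp
  have hvb : (1 - θ) * b * (1 - θ)⁻¹ = b := by field_simp
  have hH := integral_mul_le_Lp_mul_Lq_of_nonneg (Real.HolderConjugate.inv_one_sub_inv hθ₀ hθ₁)
    (hg0.mono fun x hx => Real.rpow_nonneg hx (θ * a))
    (hg0.mono fun x hx => Real.rpow_nonneg hx ((1 - θ) * b))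
    (memLp_rpow_of_integrable_rpow_mul hg0 hgm (inv_pos.2 hθ₀) (by rwa [hua]))
    (memLp_rpow_of_integrable_rpow_mul hg0 hgm (inv_pos.2 hθ₁') (by rwa [hvb]))
  rw [one_div, inv_inv, one_div, inv_inv] at hH
  have hprod : ∀ᵐ x ∂μ, g x ^ (θ * a) * g x ^ ((1 - θ) * b) = g x ^ (θ * a + (1 - θ) * b) :=
    hg0.mono fun x hx => (Real.rpow_add_of_nonneg hx (by positivity) (by positivity)).symm
  have hu : ∀ᵐ x ∂μ, (g x ^ (θ * a)) ^ θ⁻¹ = g x ^ a :=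
    hg0.mono fun x hx => by rw [← Real.rpow_mul hx, hua]
  have hv : ∀ᵐ x ∂μ, (g x ^ ((1 - θ) * b)) ^ (1 - θ)⁻¹ = g x ^ b :=
    hg0.mono fun x hx => by rw [← Real.rpow_mul hx, hvb]
  rwa [integral_congr_ae hprod, integral_congr_ae hu, integral_congr_ae hv] at hH

theorem integral_rpow_div_sub_one_le_interpolate (hg0 : 0 ≤ᵐ[μ] g) (hgm : AEMeasurable g μ)
    {p : ℝ} (hp : 2 < p) (hg1 : Integrable g μ) (hg2 : Integrable (fun x => g x ^ 2) μ) :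
    (∫ x, g x ^ (p / (p - 1)) ∂μ) ^ ((p - 1) / p) ≤
      (∫ x, g x ∂μ) ^ ((p - 2) / p) * ((∫ x, g x ^ 2 ∂μ) ^ ((1 : ℝ) / 2)) ^ (2 / p) := by
  have hp₁ : 0 < p - 1 := by linarith
  have hp₂ : 0 < p - 2 := by linarith
  have hI₁ : 0 ≤ ∫ x, g x ∂μ := integral_nonneg_of_ae hg0
  have hI₂ : 0 ≤ ∫ x, g x ^ 2 ∂μ := integral_nonneg fun x => sq_nonneg (g x)
  have h := integral_rpow_convexComb_le hg0 hgm zero_le_one zero_le_two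
    (div_pos hp₂ hp₁) ((div_lt_one hp₁).2 (by linarith))
    (by simpa only [Real.rpow_one] using hg1) (by simpa only [Real.rpow_two] using hg2)
  rw [show (p - 2) / (p - 1) * 1 + (1 - (p - 2) / (p - 1)) * 2 = p / (p - 1) by
    field_simp; ring] at h
  simp only [Real.rpow_one, Real.rpow_two] at h
  calc (∫ x, g x ^ (p / (p - 1)) ∂μ) ^ ((p - 1) / p)
      ≤ ((∫ x, g x ∂μ) ^ ((p - 2) / (p - 1)) *
          (∫ x, g x ^ 2 ∂μ) ^ (1 - (p - 2) / (p - 1))) ^ ((p - 1) / p) := by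
        gcongr
        exact integral_nonneg_of_ae (hg0.mono fun x hx => Real.rpow_nonneg hx _)
    _ = (∫ x, g x ∂μ) ^ ((p - 2) / p) * ((∫ x, g x ^ 2 ∂μ) ^ ((1 : ℝ) / 2)) ^ (2 / p) := by
        rw [Real.mul_rpow (by positivity) (by positivity), ← Real.rpow_mul hI₁,
          ← Real.rpow_mul hI₂, ← Real.rpow_mul hI₂]
        congr 2
        · field_simp
        · field_simp; ring

end Lyapunov

lemma rpow_neg_inv_le_of_one_le_mul_rpow {c x t : ℝ} (ht : 0 < t) (hx : 0 ≤ x)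
    (h : 1 ≤ c * x ^ t) : c ^ (-t⁻¹) ≤ x := by
  have hc : 0 < c := pos_of_mul_pos_left (one_pos.trans_le h) (Real.rpow_nonneg hx t)
  have hinv : c⁻¹ ≤ x ^ t := by rwa [inv_le_iff_one_le_mul₀' hc]
  calc c ^ (-t⁻¹) = c⁻¹ ^ t⁻¹ := by rw [Real.rpow_neg hc.le, Real.inv_rpow hc.le]
    _ ≤ (x ^ t) ^ t⁻¹ := by gcongr
    _ = x := Real.rpow_rpow_inv hx ht.ne'

lemma rpow_neg_inv_le_div_of_interpolation {t s A c n₁ n₂ m : ℝ} (ht : 0 < t) (hs : 0 < s)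
    (hts : t + s = 1) (hn₁ : 0 ≤ n₁) (hn₂ : 0 ≤ n₂) (hm : 0 ≤ m)
    (hinterp : m ≤ n₁ ^ t * n₂ ^ s) (hlow : 1 ≤ A * m) (hup : A * n₂ ≤ c) :
    c ^ (-t⁻¹) ≤ n₁ / n₂ := by
  have hA : 0 < A := pos_of_mul_pos_left (one_pos.trans_le hlow) hm
  have hn₂pos : 0 < n₂ := by
    refine hn₂.lt_of_ne' fun h => ?_
    rw [h, Real.zero_rpow hs.ne', mul_zero] at hinterp
    have : A * m ≤ 0 := mul_nonpos_of_nonneg_of_nonpos hA.le hinterp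
    linarith
  have hsplit : n₁ ^ t * n₂ ^ s = n₂ * (n₁ / n₂) ^ t := by
    rw [Real.div_rpow hn₁ hn₂, eq_sub_of_add_eq' hts, Real.rpow_sub hn₂pos, Real.rpow_one]
    field_simp
  refine rpow_neg_inv_le_of_one_le_mul_rpow ht (by positivity) ?_
  calc 1 ≤ A * m := hlow
    _ ≤ A * n₂ * (n₁ / n₂) ^ t := by rw [mul_assoc, ← hsplit]; gcongr
    _ ≤ c * (n₁ / n₂) ^ t := by gcongr

theorem stmt_7_general {Ω : Type*} [MeasurableSpace Ω] (μ : Measure Ω)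
    (p ε : ℝ) (hp : 2 < p)
    (f g : Ω → ℝ) (hgm : Measurable g)
    (hg0 : ∀ x, 0 ≤ g x)
    (hintg1 : Integrable g μ)
    (hintg2 : Integrable (fun x => g x ^ 2) μ)
    (hyp1 : (∫ x, f x ^ p ∂μ) ^ (1 / p) * (∫ x, g x ^ 2 ∂μ) ^ ((1 : ℝ) / 2) ≤ 1 + ε)
    (hyp2 : 1 ≤ (∫ x, f x ^ p ∂μ) ^ (1 / p) *
      (∫ x, g x ^ (p / (p - 1)) ∂μ) ^ ((p - 1) / p)) :
    1 - (∫ x, g x ∂μ) / (∫ x, g x ^ 2 ∂μ) ^ ((1 : ℝ) / 2) ≤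
      1 - (1 + ε) ^ (-(p / (p - 2))) := by
  have hp₀ : 0 < p := by linarith
  have hp₂ : 0 < p - 2 := by linarith
  have hinterp := integral_rpow_div_sub_one_le_interpolate (ae_of_all μ hg0) hgm.aemeasurable hp
    hintg1 hintg2
  have hratio := rpow_neg_inv_le_div_of_interpolation (div_pos hp₂ hp₀) (div_pos two_pos hp₀)
    (by field_simp; ring) (integral_nonneg hg0)
    (Real.rpow_nonneg (integral_nonneg fun x => sq_nonneg (g x)) _)
    (Real.rpow_nonneg (integral_nonneg fun x => Real.rpow_nonneg (hg0 x) _) _)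
    hinterp hyp2 hyp1
  rw [inv_div] at hratio
  linarith

/-- Pinching of the ratio `‖g‖₁/‖g‖₂` from the conditions
`‖f‖_p ‖g‖₂ ≤ 1 + ε` and `1 ≤ ‖f‖_p ‖g‖_{p/(p−1)}`. -/
theorem stmt_7 {Ω : Type*} [MeasurableSpace Ω] (μ : Measure Ω) [IsProbabilityMeasure μ]
    (p ε : ℝ) (hp : 2 < p) (hε : 0 ≤ ε)
    (f g : Ω → ℝ) (hfm : Measurable f) (hgm : Measurable g)
    (hf0 : ∀ x, 0 ≤ f x) (hg0 : ∀ x, 0 ≤ g x)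
    (hintf : Integrable (fun x => f x ^ p) μ)
    (hintg1 : Integrable g μ)
    (hintg2 : Integrable (fun x => g x ^ 2) μ)
    (hintgp : Integrable (fun x => g x ^ (p / (p - 1))) μ)
    (hyp1 : (∫ x, f x ^ p ∂μ) ^ (1 / p) * (∫ x, g x ^ 2 ∂μ) ^ ((1 : ℝ) / 2) ≤ 1 + ε)
    (hyp2 : 1 ≤ (∫ x, f x ^ p ∂μ) ^ (1 / p) *
      (∫ x, g x ^ (p / (p - 1)) ∂μ) ^ ((p - 1) / p)) :
    1 - (∫ x, g x ∂μ) / (∫ x, g x ^ 2 ∂μ) ^ ((1 : ℝ) / 2) ≤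
      1 - (1 + ε) ^ (-(p / (p - 2))) :=
  stmt_7_general μ p ε hp f g hgm hg0 hintg1 hintg2 hyp1 hyp2
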